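/- Let n ≥ 2 be an integer and r > 0 a real number; for ν ∈ ℕ set λ̄_ν := ν(ν + n − 2)/r², ξ_ν := 1/(8r²) + (1/(64r⁴) + λ̄_ν/(4r²))^{1/2} and η_ν := −1/(8r²) + (1/(64r⁴) + λ̄_ν/(4r²))^{1/2}. Let (μ_j)_{j∈ℕ} be a nondecreasing sequence of real numbers with μ_j → ∞ as j → ∞. Assume there is ν₀ ∈ ℕ such that: (i) for every ν ≥ ν₀, no term μ_j lies in the open interval I_ν := (λ̄_ν + ξ_ν, λ̄_{ν+1} − η_{ν+1}); and (ii) the set of ν ≥ ν₀ for which some term μ_j lies in the closed interval [λ̄_ν − η_ν, λ̄_ν + ξ_ν] is infinite. Then limsup_{j→∞} (μ_{j+1} − μ_j)/(μ_j)^{1/2} ≥ 2/(3r); in particular limsup_{j→∞} (μ_{j+1} − μ_j)/(μ_j)^{1/2} > 0. -/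

import Mathlib

/-!
Take ν in the infinite set beyond `max n (2 r² μ_M)`, and let `μ_j` be the last term not exceeding
`λ̄_ν + ξ_ν`. By (ii) and monotonicity `μ_j` lies in the cluster `[λ̄_ν − η_ν, λ̄_ν + ξ_ν]`, and by (i)
`μ_{j+1}` has jumped over the gap `I_ν`. Bounding `√(1/(64r⁴) + λ̄_ν/(4r²)) ≤ (4ν + 2n − 3)/(8r²)`
shows that `I_ν` has length at least `ν/r²` while `μ_j ≤ (3ν/(2r))²`, so the normalised jump at `j`
is at least `2/(3r)`; and `j ≥ M` because `μ_j ≥ λ̄_ν − η_ν ≥ ν²/(2r²) > μ_M`.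
-/

open Filter

theorem exists_le_lt_succ_of_le_of_lt {α : Type*} [LinearOrder α] {u : ℕ → α} {b : α}
    {j₀ m : ℕ} (hjm : j₀ ≤ m) (h₀ : u j₀ ≤ b) (hm : b < u m) :
    ∃ j, j₀ ≤ j ∧ u j ≤ b ∧ b < u (j + 1) := by
  induction m, hjm using Nat.le_induction with
  | base => exact absurd hm h₀.not_gt
  | succ m hjm ih =>
    by_cases hbm : b < u m
    · exact ih hbm
    · exact ⟨m, hjm, not_lt.1 hbm, hm⟩

theorem Monotone.exists_jump_over_gap {α : Type*} [LinearOrder α] [NoMaxOrder α] {μ : ℕ → α}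
    (hmono : Monotone μ) (htend : Tendsto μ atTop atTop) {a b c : α} {j₀ : ℕ}
    (hj₀ : μ j₀ ∈ Set.Icc a b) (hgap : ∀ j, μ j ∉ Set.Ioo b c) :
    ∃ j, μ j ∈ Set.Icc a b ∧ c ≤ μ (j + 1) := by
  obtain ⟨m, hbm, hjm⟩ :=
    ((htend.eventually_gt_atTop b).and (eventually_ge_atTop j₀)).exists
  obtain ⟨j, hj₀j, hjb, hbj⟩ := exists_le_lt_succ_of_le_of_lt hjm hj₀.2 hbm
  exact ⟨j, ⟨hj₀.1.trans (hmono hj₀j), hjb⟩, not_lt.1 fun hc => hgap (j + 1) ⟨hbj, hc⟩⟩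

noncomputable section

def sphereEigenvalue (n : ℕ) (r v : ℝ) : ℝ := v * (v + n - 2) / r ^ 2

def gapRadius (n : ℕ) (r v : ℝ) : ℝ :=
  √(1 / (64 * r ^ 4) + sphereEigenvalue n r v / (4 * r ^ 2))

/-- `λ̄ + ξ`, the right end of the cluster around `λ̄`. -/
def upperEdge (n : ℕ) (r v : ℝ) : ℝ :=
  sphereEigenvalue n r v + 1 / (8 * r ^ 2) + gapRadius n r v

/-- `λ̄ − η`, the left end of the cluster around `λ̄`. -/
def lowerEdge (n : ℕ) (r v : ℝ) : ℝ :=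
  sphereEigenvalue n r v + 1 / (8 * r ^ 2) - gapRadius n r v

end

section Edges

variable {n : ℕ} {r v : ℝ}

theorem gapRadius_le (hn : 2 ≤ n) (hr : r ≠ 0) (hv : 0 ≤ v) :
    gapRadius n r v ≤ (4 * v + 2 * n - 3) / (8 * r ^ 2) := by
  have hn' : (2 : ℝ) ≤ n := by exact_mod_cast hn
  rw [gapRadius, sphereEigenvalue,
    Real.sqrt_le_left (div_nonneg (by linarith) (by positivity))]
  have hsq : 1 + 16 * (v * (v + n - 2)) ≤ (4 * v + 2 * n - 3) ^ 2 := by nlinarith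
  calc 1 / (64 * r ^ 4) + v * (v + n - 2) / r ^ 2 / (4 * r ^ 2)
      = (1 + 16 * (v * (v + n - 2))) / (8 * r ^ 2) ^ 2 := by field_simp; ring
    _ ≤ ((4 * v + 2 * n - 3) / (8 * r ^ 2)) ^ 2 := by rw [div_pow]; gcongr

theorem upperEdge_le (hn : 2 ≤ n) (hr : r ≠ 0) (hv : 0 ≤ v) :
    upperEdge n r v ≤ (8 * v * (v + n - 2) + 4 * v + 2 * n - 2) / (8 * r ^ 2) := by
  have := gapRadius_le hn hr hv
  calc upperEdge n r v
      ≤ sphereEigenvalue n r v + 1 / (8 * r ^ 2) + (4 * v + 2 * n - 3) / (8 * r ^ 2) := by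
        unfold upperEdge; gcongr
    _ = _ := by unfold sphereEigenvalue; field_simp; ring

theorem le_lowerEdge (hn : 2 ≤ n) (hr : r ≠ 0) (hv : 0 ≤ v) :
    (8 * v * (v + n - 2) - 4 * v - 2 * n + 4) / (8 * r ^ 2) ≤ lowerEdge n r v := by
  have := gapRadius_le hn hr hv
  calc (8 * v * (v + n - 2) - 4 * v - 2 * n + 4) / (8 * r ^ 2)
      = sphereEigenvalue n r v + 1 / (8 * r ^ 2) - (4 * v + 2 * n - 3) / (8 * r ^ 2) := by
        unfold sphereEigenvalue; field_simp; ring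
    _ ≤ lowerEdge n r v := by unfold lowerEdge; gcongr

theorem upperEdge_le_sq (hn : 2 ≤ n) (hr : r ≠ 0) (hv : n ≤ v) :
    upperEdge n r v ≤ (3 * v / (2 * r)) ^ 2 := by
  have hn' : (2 : ℝ) ≤ n := by exact_mod_cast hn
  calc upperEdge n r v ≤ _ := upperEdge_le hn hr (by linarith)
    _ ≤ 18 * v ^ 2 / (8 * r ^ 2) := by gcongr; nlinarith
    _ = (3 * v / (2 * r)) ^ 2 := by field_simp; ring

theorem sq_div_le_lowerEdge (hn : 2 ≤ n) (hr : r ≠ 0) (hv : 1 ≤ v) :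
    v ^ 2 / (2 * r ^ 2) ≤ lowerEdge n r v := by
  have hn' : (2 : ℝ) ≤ n := by exact_mod_cast hn
  calc v ^ 2 / (2 * r ^ 2) = 4 * v ^ 2 / (8 * r ^ 2) := by field_simp; ring
    _ ≤ _ := by gcongr; nlinarith
    _ ≤ lowerEdge n r v := le_lowerEdge hn hr (by linarith)

theorem div_le_lowerEdge_add_one_sub_upperEdge (hn : 2 ≤ n) (hr : r ≠ 0) (hv : 0 ≤ v) :
    v / r ^ 2 ≤ lowerEdge n r (v + 1) - upperEdge n r v := by
  have hn' : (2 : ℝ) ≤ n := by exact_mod_cast hn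
  have hlow := le_lowerEdge hn hr (by linarith : 0 ≤ v + 1)
  have hup := upperEdge_le hn hr hv
  calc v / r ^ 2 = 8 * v / (8 * r ^ 2) := by field_simp
    _ ≤ (8 * v + 4 * n - 6) / (8 * r ^ 2) := by gcongr; linarith
    _ = (8 * (v + 1) * (v + 1 + n - 2) - 4 * (v + 1) - 2 * n + 4) / (8 * r ^ 2)
        - (8 * v * (v + n - 2) + 4 * v + 2 * n - 2) / (8 * r ^ 2) := by field_simp; ring
    _ ≤ lowerEdge n r (v + 1) - upperEdge n r v := by gcongr

theorem two_div_three_mul_le_div_sqrt (hn : 2 ≤ n) (hr : 0 < r) (hv : n ≤ v) {x y : ℝ}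
    (hx : x ∈ Set.Icc (lowerEdge n r v) (upperEdge n r v)) (hy : lowerEdge n r (v + 1) ≤ y) :
    2 / (3 * r) ≤ (y - x) / √x := by
  have hn' : (2 : ℝ) ≤ n := by exact_mod_cast hn
  have hv₀ : 0 < v := by linarith
  have hx₀ : 0 < x := calc
    0 < v ^ 2 / (2 * r ^ 2) := by positivity
    _ ≤ x := (sq_div_le_lowerEdge hn hr.ne' (by linarith)).trans hx.1
  have hsqrt : √x ≤ 3 * v / (2 * r) :=
    (Real.sqrt_le_left (by positivity)).2 (hx.2.trans (upperEdge_le_sq hn hr.ne' hv))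
  have hjump : v / r ^ 2 ≤ y - x := by
    linarith [div_le_lowerEdge_add_one_sub_upperEdge hn hr.ne' (by linarith : 0 ≤ v), hx.2]
  calc 2 / (3 * r) = (v / r ^ 2) / (3 * v / (2 * r)) := by
        field_simp
    _ ≤ (y - x) / √x :=
        div_le_div₀ ((by positivity : 0 ≤ v / r ^ 2).trans hjump) hjump (Real.sqrt_pos.2 hx₀)
          hsqrt

end Edges

/-- Let `n ≥ 2`, `r > 0`, `λ̄_ν := ν(ν + n − 2)/r²`,
`ξ_ν := 1/(8r²) + (1/(64r⁴) + λ̄_ν/(4r²))^{1/2}`,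
`η_ν := −1/(8r²) + (1/(64r⁴) + λ̄_ν/(4r²))^{1/2}`.  Let `(μ_j)` be a nondecreasing real
sequence with `μ_j → ∞`.  Assume there is `ν₀` such that (i) for every `ν ≥ ν₀` no term `μ_j`
lies in the open interval `I_ν = (λ̄_ν + ξ_ν, λ̄_{ν+1} − η_{ν+1})`, and (ii) infinitely many
`ν ≥ ν₀` are such that some `μ_j` lies in `[λ̄_ν − η_ν, λ̄_ν + ξ_ν]`.  Then
`limsup_{j→∞} (μ_{j+1} − μ_j)/(μ_j)^{1/2} ≥ 2/(3r) > 0` (the limsup taken in the extended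
reals). -/
theorem statement13 (n : ℕ) (hn : 2 ≤ n) (r : ℝ) (hr : 0 < r)
    (lamb : ℕ → ℝ) (hlamb : ∀ ν : ℕ, lamb ν = (ν : ℝ) * ((ν : ℝ) + (n : ℝ) - 2) / r ^ 2)
    (ξ : ℕ → ℝ)
    (hξ : ∀ ν : ℕ, ξ ν = 1 / (8 * r ^ 2) + Real.sqrt (1 / (64 * r ^ 4) + lamb ν / (4 * r ^ 2)))
    (η : ℕ → ℝ)
    (hη : ∀ ν : ℕ, η ν = -(1 / (8 * r ^ 2)) + Real.sqrt (1 / (64 * r ^ 4) + lamb ν / (4 * r ^ 2)))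
    (μ : ℕ → ℝ) (hmono : Monotone μ) (htend : Tendsto μ atTop atTop)
    (ν₀ : ℕ)
    (hres : ∀ ν : ℕ, ν₀ ≤ ν → ∀ j : ℕ,
      μ j ∉ Set.Ioo (lamb ν + ξ ν) (lamb (ν + 1) - η (ν + 1)))
    (hinf : {ν : ℕ | ν₀ ≤ ν ∧ ∃ j : ℕ,
      μ j ∈ Set.Icc (lamb ν - η ν) (lamb ν + ξ ν)}.Infinite) :
    ((2 / (3 * r) : ℝ) : EReal) ≤
        limsup (fun j : ℕ => (((μ (j + 1) - μ j) / Real.sqrt (μ j) : ℝ) : EReal)) atTop ∧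
      (0 : EReal) <
        limsup (fun j : ℕ => (((μ (j + 1) - μ j) / Real.sqrt (μ j) : ℝ) : EReal)) atTop := by
  have hup (ν : ℕ) : lamb ν + ξ ν = upperEdge n r ν := by
    simp only [upperEdge, gapRadius, sphereEigenvalue, hξ, hlamb]; ring
  have hlow (ν : ℕ) : lamb ν - η ν = lowerEdge n r ν := by
    simp only [lowerEdge, gapRadius, sphereEigenvalue, hη, hlamb]; ring
  have hfreq : ∃ᶠ j in atTop, 2 / (3 * r) ≤ (μ (j + 1) - μ j) / √(μ j) := by
    refine frequently_atTop.2 fun M => ?_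
    obtain ⟨ν, ⟨hν₀, j₀, hj₀⟩, hνM⟩ := hinf.exists_gt (max n ⌈2 * r ^ 2 * μ M⌉₊)
    have hnν : (n : ℝ) ≤ ν := by exact_mod_cast (le_max_left _ _).trans hνM.le
    rw [hlow, hup] at hj₀
    have hgap (j : ℕ) : μ j ∉ Set.Ioo (upperEdge n r ν) (lowerEdge n r (ν + 1)) := by
      simpa [hup, hlow] using hres ν hν₀ j
    obtain ⟨j, hj, hjump⟩ := hmono.exists_jump_over_gap htend hj₀ hgap
    have hμM : μ M < lowerEdge n r ν := by
      have hMν : 2 * r ^ 2 * μ M < ν :=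
        Nat.lt_of_ceil_lt ((le_max_right _ _).trans_lt hνM)
      have hν₁ : (1 : ℝ) ≤ ν := by exact_mod_cast (by omega : 1 ≤ ν)
      refine lt_of_lt_of_le ?_ (sq_div_le_lowerEdge hn hr.ne' hν₁)
      rw [lt_div_iff₀ (by positivity)]
      nlinarith
    exact ⟨j, (hmono.reflect_lt (hμM.trans_le hj.1)).le,
      two_div_three_mul_le_div_sqrt hn hr hnν hj hjump⟩
  have hlimsup := le_limsup_of_frequently_le' (hfreq.mono fun j hj => EReal.coe_le_coe_iff.2 hj)
  exact ⟨hlimsup, (EReal.coe_pos.2 (by positivity)).trans_le hlimsup⟩
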